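/- arXiv:0901.1333 — 2 statements merged into one kernel-verified Lean document; each statement's English description precedes it below -/
import Mathlib

section
/- Let G be a finite group, k ≥ 1 an integer, and fix signs t_0,…,t_{k−1} ∈ {+,−}. On H = (ℂ^G)^{⊗k} let T_i^g denote the operator acting as T^g_{t_i} on the i-th tensor factor and as the identity elsewhere, and define the plaquette operator B = ∑ T_0^{g_0} T_1^{g_1} ⋯ T_{k−1}^{g_{k−1}}, the sum over all tuples (g_0,…,g_{k−1}) ∈ G^k with g_0 g_1 ⋯ g_{k−1} = 1. On H ⊗ ℂ^G define M_i = ∑_{g∈G} T_i^g ⊗ L^g_+ (the auxiliary factor carries L^g_+) and |Ψ⟩ = |1⟩ in the auxiliary factor. Then (1_H ⊗ ⟨Ψ|) M_0 M_1 ⋯ M_{k−1} (1_H ⊗ |Ψ⟩) = B and (1_H ⊗ ⟨Ψ|) M_{k−1}† ⋯ M_1† M_0† (1_H ⊗ |Ψ⟩) = B. -/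
open Matrix Kronecker BigOperators

noncomputable section

variable {G : Type*} [Group G] [Fintype G] [DecidableEq G]

/-- `L^g_+ : |z⟩ ↦ |gz⟩` (left multiplication by `g`). -/
def Lp (g : G) : Matrix G G ℂ := Matrix.of fun x z => if x = g * z then 1 else 0

/-- `L^g_- : |z⟩ ↦ |z g⁻¹⟩` (right multiplication by `g⁻¹`). -/
def Lm (g : G) : Matrix G G ℂ := Matrix.of fun x z => if x = z * g⁻¹ then 1 else 0

/-- `T^g_+ = |g⟩⟨g|`. -/
def Tp (g : G) : Matrix G G ℂ := Matrix.of fun x z => if x = g ∧ z = g then 1 else 0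

/-- `T^g_- = |g⁻¹⟩⟨g⁻¹|`. -/
def Tm (g : G) : Matrix G G ℂ := Tp g⁻¹

/-- Signed `L` operator: `true` stands for `+`, `false` for `−`. -/
def Lsgn (s : Bool) (g : G) : Matrix G G ℂ := if s then Lp g else Lm g

/-- Signed `T` operator: `true` stands for `+`, `false` for `−`. -/
def Tsgn (s : Bool) (g : G) : Matrix G G ℂ := if s then Tp g else Tm g

/-- The operator acting as `A` on the `i`-th tensor factor of `(ℂ^G)^{⊗k}`
and as the identity on all other factors. -/
def factor {k : ℕ} (i : Fin k) (A : Matrix G G ℂ) : Matrix (Fin k → G) (Fin k → G) ℂ :=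
  Matrix.of fun x y => if ∀ j, j ≠ i → x j = y j then A (x i) (y i) else 0

/-- The partial matrix element `(1_H ⊗ ⟨ψ|) Z (1_H ⊗ |ψ⟩)` of an operator `Z` on `H ⊗ ℂ^R`. -/
def pme {H R : Type*} [Fintype R] (ψ : R → ℂ) (Z : Matrix (H × R) (H × R) ℂ) :
    Matrix H H ℂ :=
  Matrix.of fun x y => ∑ a : R, ∑ b : R, (starRingEnd ℂ) (ψ a) * Z (x, a) (y, b) * ψ b

/-! Since `g ↦ L^g_+` is a representation, multiplying out `M₀ ⋯ M_{k-1}` gives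
`∑_{(g₀,…,g_{k-1})} T₀^{g₀} ⋯ T_{k-1}^{g_{k-1}} ⊗ L^{g₀⋯g_{k-1}}_+`, and `⟨1|L^h_+|1⟩ = δ_{h,1}`
keeps exactly the tuples with product `1`. For the adjoint product: the partial matrix element
commutes with `†`, and `B` is Hermitian because the `T_i^g` are Hermitian projections acting on
distinct tensor factors, hence commute, so each product `T₀^{g₀} ⋯ T_{k-1}^{g_{k-1}}` equals its
reverse. -/

open Function

lemma Lp_one {G : Type*} [Group G] [DecidableEq G] : Lp (1 : G) = 1 := by
  ext x z
  simp [Lp, one_apply]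

lemma Lp_mul (g h : G) : Lp (g * h) = Lp g * Lp h := by
  ext x z
  simp only [Lp, mul_apply, of_apply]
  rw [Finset.sum_eq_single (h * z)]
  · simp [mul_assoc]
  · intro b _ hb
    simp [hb]
  · simp

def leftRegularRep : G →* Matrix G G ℂ where
  toFun := Lp
  map_one' := Lp_one
  map_mul' := Lp_mul

@[simp]
lemma leftRegularRep_apply (g : G) : leftRegularRep g = Lp g := rfl

lemma prod_finRange_sum_kronecker {M α n r : Type*} [Monoid M] [Fintype M] [CommSemiring α]
    [Fintype n] [DecidableEq n] [Fintype r] [DecidableEq r]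
    (ρ : M →* Matrix r r α) (m : ℕ) (A : Fin m → M → Matrix n n α) :
    ((List.finRange m).map fun i => ∑ g, A i g ⊗ₖ ρ g).prod
      = ∑ c : Fin m → M,
          ((List.finRange m).map fun i => A i (c i)).prod ⊗ₖ ρ ((List.finRange m).map c).prod := by
  induction m with
  | zero => simp
  | succ m ih =>
    rw [← (Fin.consEquiv fun _ => M).sum_comp, Fintype.sum_prod_type]
    simp only [List.finRange_succ, List.map_cons, List.map_map, List.prod_cons, comp_def,
      ih fun j g => A j.succ g, Finset.sum_mul_sum]
    refine Finset.sum_congr rfl fun g _ => Finset.sum_congr rfl fun c _ => ?_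
    simp only [Fin.consEquiv_apply, Fin.cons_zero, Fin.cons_succ, map_mul,
      mul_kronecker_mul]

section PartialMatrixElement

variable {H R : Type*} [Fintype R]

lemma pme_sum {ι : Type*} (ψ : R → ℂ) (s : Finset ι) (Z : ι → Matrix (H × R) (H × R) ℂ) :
    pme ψ (∑ c ∈ s, Z c) = ∑ c ∈ s, pme ψ (Z c) := by
  ext x y
  simp only [pme, of_apply, Matrix.sum_apply, Finset.mul_sum, Finset.sum_mul]
  exact (Finset.sum_congr rfl fun _ _ => Finset.sum_comm).trans Finset.sum_comm

lemma pme_kronecker (ψ : R → ℂ) (X : Matrix H H ℂ) (Y : Matrix R R ℂ) :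
    pme ψ (X ⊗ₖ Y) = (star ψ ⬝ᵥ (Y *ᵥ ψ)) • X := by
  ext x y
  simp only [pme, of_apply, kronecker_apply, Matrix.smul_apply, dotProduct,
    mulVec, Finset.sum_mul, Finset.mul_sum, Pi.star_apply, RCLike.star_def, smul_eq_mul]
  exact Finset.sum_congr rfl fun _ _ => Finset.sum_congr rfl fun _ _ => by ring

lemma pme_conjTranspose (ψ : R → ℂ) (Z : Matrix (H × R) (H × R) ℂ) :
    pme ψ Zᴴ = (pme ψ Z)ᴴ := by
  ext x y
  simp only [pme, of_apply, conjTranspose_apply, star_sum, star_mul',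
    RCLike.star_def, Complex.conj_conj]
  rw [Finset.sum_comm]
  exact Finset.sum_congr rfl fun _ _ => Finset.sum_congr rfl fun _ _ => by ring

end PartialMatrixElement

lemma Matrix.isHermitian_list_prod_of_pairwise_commute {n α : Type*} [Fintype n] [DecidableEq n]
    [CommSemiring α] [StarRing α] {l : List (Matrix n n α)} (hl : ∀ A ∈ l, A.IsHermitian)
    (hc : l.Pairwise Commute) : l.prod.IsHermitian := by
  have hstar : l.map conjTranspose = l := (List.map_congr_left hl).trans (List.map_id l)
  rw [IsHermitian, conjTranspose_list_prod, hstar]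
  exact (List.reverse_perm l).prod_eq' (List.pairwise_reverse.mpr (hc.imp Commute.symm))

section Factor

variable {X : Type*} [DecidableEq X]

lemma Tp_isHermitian (g : X) : (Tp g).IsHermitian := by
  ext x z
  simp [Tp, conjTranspose_apply, apply_ite star, and_comm]

lemma Tsgn_isHermitian [Group X] (s : Bool) (g : X) : (Tsgn s g).IsHermitian := by
  cases s
  · exact Tp_isHermitian g⁻¹
  · exact Tp_isHermitian g

variable {k : ℕ}

lemma factor_conjTranspose (i : Fin k) (A : Matrix X X ℂ) : (factor i A)ᴴ = factor i Aᴴ := by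
  ext x y
  simp only [conjTranspose_apply, factor, of_apply, apply_ite star, star_zero]
  simp_rw [eq_comm (a := x _)]

lemma forall_ne_eq_and_forall_ne_eq_iff {ι β : Type*} [DecidableEq ι] {i j : ι} (hij : i ≠ j)
    {x y z : ι → β} :
    ((∀ m, m ≠ i → x m = z m) ∧ ∀ m, m ≠ j → z m = y m) ↔
      z = update y j (x j) ∧ ∀ m, m ≠ i → m ≠ j → x m = y m := by
  constructor
  · rintro ⟨hxz, hzy⟩
    refine ⟨funext fun m => ?_, fun m hi hj => (hxz m hi).trans (hzy m hj)⟩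
    rcases eq_or_ne m j with rfl | hm
    · rw [update_self, hxz m hij.symm]
    · rw [update_of_ne hm, hzy m hm]
  · rintro ⟨rfl, hxy⟩
    refine ⟨fun m hi => ?_, fun m hm => update_of_ne hm _ _⟩
    rcases eq_or_ne m j with rfl | hm
    · rw [update_self]
    · rw [update_of_ne hm, hxy m hi hm]

lemma factor_mul_factor_apply [Fintype X] {i j : Fin k} (hij : i ≠ j) (A B : Matrix X X ℂ)
    (x y : Fin k → X) :
    (factor i A * factor j B) x y =
      if ∀ m, m ≠ i → m ≠ j → x m = y m then A (x i) (y i) * B (x j) (y j) else 0 := by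
  simp only [mul_apply, factor, of_apply, ite_zero_mul_ite_zero, forall_ne_eq_and_forall_ne_eq_iff hij,
    ite_and, Finset.sum_ite_eq', Finset.mem_univ, if_true, update_self, update_of_ne hij]

lemma factor_commute [Fintype X] {i j : Fin k} (hij : i ≠ j) (A B : Matrix X X ℂ) :
    Commute (factor i A) (factor j B) := by
  ext x y
  rw [factor_mul_factor_apply hij, factor_mul_factor_apply hij.symm, mul_comm]
  congr 1
  exact propext (forall_congr' fun _ => imp.swap)

lemma factor_isHermitian (i : Fin k) {A : Matrix X X ℂ} (hA : A.IsHermitian) :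
    (factor i A).IsHermitian :=
  (factor_conjTranspose i A).trans (congrArg _ hA)

lemma isHermitian_prod_factor [Fintype X] (F : Fin k → Matrix X X ℂ)
    (hF : ∀ i, (F i).IsHermitian) :
    ((List.finRange k).map fun i => factor i (F i)).prod.IsHermitian := by
  refine isHermitian_list_prod_of_pairwise_commute ?_ ?_
  · simpa using fun i => factor_isHermitian i (hF i)
  · exact List.Pairwise.map _ (fun _ _ hij => factor_commute hij _ _) (List.nodup_finRange k)

end Factor

theorem statement1_general (k : ℕ) (t : Fin k → Bool)
    (T : Fin k → G → Matrix (Fin k → G) (Fin k → G) ℂ)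
    (hT : ∀ i g, T i g = factor i (Tsgn (t i) g))
    (B : Matrix (Fin k → G) (Fin k → G) ℂ)
    (hB : B = ∑ a ∈ Finset.univ.filter
        (fun a : Fin k → G => ((List.finRange k).map a).prod = 1),
      ((List.finRange k).map (fun i => T i (a i))).prod)
    (M : Fin k → Matrix ((Fin k → G) × G) ((Fin k → G) × G) ℂ)
    (hM : ∀ i, M i = ∑ g : G, (T i g) ⊗ₖ Lp g)
    (ψ : G → ℂ) (hψ : ∀ g, ψ g = if g = 1 then 1 else 0) :
    pme ψ (((List.finRange k).map M).prod) = B ∧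
    pme ψ ((((List.finRange k).reverse).map (fun i => (M i)ᴴ)).prod) = B := by
  obtain rfl : ψ = Pi.single 1 1 := funext fun g => by rw [hψ, Pi.single_apply]
  have hexpand : ((List.finRange k).map M).prod = ∑ c : Fin k → G,
      ((List.finRange k).map fun i => T i (c i)).prod ⊗ₖ Lp ((List.finRange k).map c).prod := by
    rw [show M = _ from funext hM]
    exact prod_finRange_sum_kronecker leftRegularRep k T
  have hprod : pme (Pi.single 1 1) ((List.finRange k).map M).prod = B := by
    rw [hexpand, pme_sum, hB, Finset.sum_filter]
    refine Finset.sum_congr rfl fun c _ => ?_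
    simp [pme_kronecker, Lp, mulVec_single, ite_smul, eq_comm]
  have hB_herm : B.IsHermitian := by
    rw [hB]
    refine (isSelfAdjoint_sum _ fun a _ => IsHermitian.isSelfAdjoint ?_).isHermitian
    simpa only [hT] using isHermitian_prod_factor _ fun i => Tsgn_isHermitian (t i) (a i)
  have hrev : (((List.finRange k).reverse).map fun i => (M i)ᴴ).prod
      = ((List.finRange k).map M).prodᴴ := by
    rw [conjTranspose_list_prod, List.map_map, ← List.map_reverse]
    rfl
  rw [hrev, pme_conjTranspose, hprod, hB_herm.eq]
  exact ⟨rfl, rfl⟩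

/-- The plaquette operator `B = ∑_{g₀g₁⋯g_{k-1}=1} T₀^{g₀} ⋯ T_{k-1}^{g_{k-1}}`
is obtained as the partial matrix element, in the state `|Ψ⟩ = |1⟩` of the auxiliary register,
of the ordered product of the operators `Mᵢ = ∑_g Tᵢ^g ⊗ L^g₊`, and also of the reversed
product of their adjoints. -/
theorem statement1 (k : ℕ) (hk : 1 ≤ k) (t : Fin k → Bool)
    (T : Fin k → G → Matrix (Fin k → G) (Fin k → G) ℂ)
    (hT : ∀ i g, T i g = factor i (Tsgn (t i) g))
    (B : Matrix (Fin k → G) (Fin k → G) ℂ)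
    (hB : B = ∑ a ∈ Finset.univ.filter
        (fun a : Fin k → G => ((List.finRange k).map a).prod = 1),
      ((List.finRange k).map (fun i => T i (a i))).prod)
    (M : Fin k → Matrix ((Fin k → G) × G) ((Fin k → G) × G) ℂ)
    (hM : ∀ i, M i = ∑ g : G, (T i g) ⊗ₖ Lp g)
    (ψ : G → ℂ) (hψ : ∀ g, ψ g = if g = 1 then 1 else 0) :
    pme ψ (((List.finRange k).map M).prod) = B ∧
    pme ψ ((((List.finRange k).reverse).map (fun i => (M i)ᴴ)).prod) = B :=
  statement1_general k t T hT B hB M hM ψ hψ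
end
end

section
/- Let G be a finite group, k ≥ 1 an integer, and fix signs s_0,…,s_{k−1}, t_0,…,t_{k−1} ∈ {+,−}. On H = (ℂ^G)^{⊗k} let L_i^g (resp. T_i^g) act as L^g_{s_i} (resp. T^g_{t_i}) on the i-th tensor factor and as the identity elsewhere. Then the vertex operator A = (1/|G|) ∑_{g∈G} L_0^g L_1^g ⋯ L_{k−1}^g is an orthogonal projection (A² = A = A†), and the plaquette operator B = ∑ T_0^{g_0} T_1^{g_1} ⋯ T_{k−1}^{g_{k−1}}, summed over all tuples (g_0,…,g_{k−1}) ∈ G^k with g_{k−1} ⋯ g_1 g_0 = 1, is an orthogonal projection (B² = B = B†). -/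
/-!
The vertex operator is the group average `|G|⁻¹ ∑ g, W g` of the unitary representation
`W g = ⨂ i, L^g_{s_i}`: since `W g * ∑ h, W h = ∑ h, W h` the average is idempotent, and since
`(W g)ᴴ = W g⁻¹` it is self-adjoint. Each summand of the plaquette operator is the rank-one
projection `|τ a⟩⟨τ a|` with `τ a = (a_i^{±1})_i`, and `τ` is injective, so these are pairwise
orthogonal projections and so is their sum.
-/

open Matrix Kronecker BigOperators

noncomputable section

variable {G : Type*} [Group G] [Fintype G] [DecidableEq G]

open Function

namespace Matrix

section PiKronecker

variable {ι n R : Type*} [Fintype ι] [CommSemiring R]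

def piKronecker (M : ι → Matrix n n R) : Matrix (ι → n) (ι → n) R :=
  of fun x y => ∏ i, M i (x i) (y i)

theorem piKronecker_mul [DecidableEq ι] [Fintype n] (M N : ι → Matrix n n R) :
    piKronecker M * piKronecker N = piKronecker (M * N) := by
  ext x y
  simp only [piKronecker, mul_apply, of_apply, Pi.mul_apply, Finset.prod_univ_sum,
    Fintype.piFinset_univ, Finset.prod_mul_distrib]

theorem piKronecker_one [DecidableEq ι] [DecidableEq n] :
    piKronecker (1 : ι → Matrix n n R) = 1 := by
  ext x y
  simp [piKronecker, one_apply, Finset.prod_ite_zero, funext_iff]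

def piKroneckerHom [DecidableEq ι] [Fintype n] [DecidableEq n] :
    (ι → Matrix n n R) →* Matrix (ι → n) (ι → n) R where
  toFun := piKronecker
  map_one' := piKronecker_one
  map_mul' M N := (piKronecker_mul M N).symm

theorem conjTranspose_piKronecker [StarRing R] (M : ι → Matrix n n R) :
    (piKronecker M)ᴴ = piKronecker fun i => (M i)ᴴ := by
  ext x y
  simp [piKronecker, star_prod]

theorem piKronecker_single [DecidableEq n] (a b : ι → n) (r : ι → R) :
    piKronecker (fun i => single (a i) (b i) (r i)) = single a b (∏ i, r i) := by
  ext x y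
  simp [piKronecker, single_apply, Finset.prod_ite_zero, funext_iff, forall_and]

end PiKronecker

section SumSingle

variable {ι n R : Type*} [DecidableEq n] [Semiring R]

theorem isIdempotentElem_sum_single_self [Fintype n] {c : ι → n} (hc : Injective c)
    (S : Finset ι) : IsIdempotentElem (∑ a ∈ S, single (c a) (c a) (1 : R)) := by
  rw [IsIdempotentElem, Finset.sum_mul_sum]
  refine Finset.sum_congr rfl fun a ha => ?_
  rw [Finset.sum_eq_single_of_mem a ha fun b _ hba =>
    single_mul_single_of_ne _ _ _ _ (hc.ne hba.symm) _, single_mul_single_same, mul_one]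

theorem isSelfAdjoint_sum_single_self [StarRing R] (c : ι → n) (S : Finset ι) :
    IsSelfAdjoint (∑ a ∈ S, single (c a) (c a) (1 : R)) :=
  isSelfAdjoint_sum S fun a _ => by
    rw [IsSelfAdjoint, star_eq_conjTranspose, conjTranspose_single, star_one]

end SumSingle

end Matrix

section Average

variable {𝕜 A : Type*} [Field 𝕜] [Ring A] [Algebra 𝕜 A]

omit [DecidableEq G] in
theorem sum_mul_sum_eq_card_smul_sum (ρ : G →* A) :
    (∑ g, ρ g) * ∑ g, ρ g = Fintype.card G • ∑ g, ρ g := by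
  have hrow : ∀ g, ρ g * ∑ h, ρ h = ∑ h, ρ h := fun g => by
    rw [Finset.mul_sum]
    exact Fintype.sum_bijective (g * ·) (Group.mulLeft_bijective g) _ _ fun h =>
      (map_mul ρ g h).symm
  rw [Finset.sum_mul]
  simp only [hrow, Finset.sum_const, Finset.card_univ]

omit [DecidableEq G] in
theorem isIdempotentElem_average [CharZero 𝕜] (ρ : G →* A) :
    IsIdempotentElem ((Fintype.card G : 𝕜)⁻¹ • ∑ g, ρ g) := by
  have hcard : (Fintype.card G : 𝕜) ≠ 0 := Nat.cast_ne_zero.2 Fintype.card_ne_zero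
  rw [IsIdempotentElem, smul_mul_smul_comm, sum_mul_sum_eq_card_smul_sum,
    ← Nat.cast_smul_eq_nsmul 𝕜, smul_smul, inv_mul_cancel_right₀ hcard]

omit [DecidableEq G] in
theorem isSelfAdjoint_average [StarRing 𝕜] [StarRing A] [StarModule 𝕜 A] (ρ : G →* A)
    (hρ : ∀ g, star (ρ g) = ρ g⁻¹) :
    IsSelfAdjoint ((Fintype.card G : 𝕜)⁻¹ • ∑ g, ρ g) := by
  rw [IsSelfAdjoint, star_smul, star_sum, star_inv₀, star_natCast]
  simp only [hρ]
  exact congrArg _ (Fintype.sum_equiv (Equiv.inv G) _ _ fun _ => rfl)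

end Average

theorem List.prod_map_mulSingle {ι : Type*} [DecidableEq ι] {M : ι → Type*} [∀ i, Monoid (M i)]
    (f : ∀ i, M i) {l : List ι} (hl : l.Nodup) :
    (l.map fun i => Pi.mulSingle i (f i)).prod = fun j => if j ∈ l then f j else 1 := by
  induction l with
  | nil => funext j; simp
  | cons i l ih =>
    rw [List.nodup_cons] at hl
    funext j
    rw [List.map_cons, List.prod_cons, ih hl.2, Pi.mul_apply]
    by_cases hj : j = i
    · subst hj; simp [hl.1]
    · simp [hj]

omit [Group G] [Fintype G] in
theorem factor_eq_piKronecker {k : ℕ} (i : Fin k) (M : Matrix G G ℂ) :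
    factor i M = piKronecker (Pi.mulSingle i M) := by
  ext x y
  have hrest : ∀ j ∈ ({i}ᶜ : Finset (Fin k)),
      Pi.mulSingle (M := fun _ => Matrix G G ℂ) i M j (x j) (y j) = if x j = y j then 1 else 0 :=
    fun j hj => by rw [Pi.mulSingle_eq_of_ne (by simpa using hj), one_apply]
  rw [piKronecker, of_apply, Fintype.prod_eq_mul_prod_compl i, Pi.mulSingle_eq_same,
    Finset.prod_congr rfl hrest, Finset.prod_boole]
  simp [factor]

omit [Group G] in
theorem prod_factor_finRange {k : ℕ} (M : Fin k → Matrix G G ℂ) :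
    ((List.finRange k).map fun i => factor i (M i)).prod = piKronecker M := by
  calc _ = piKroneckerHom ((List.finRange k).map fun i => Pi.mulSingle i (M i)).prod := by
        simp only [factor_eq_piKronecker, map_list_prod, List.map_map]; rfl
    _ = piKronecker M := by
        rw [List.prod_map_mulSingle M (List.nodup_finRange k)]
        simp [piKroneckerHom]

def LsgnHom (s : Bool) : G →* Matrix G G ℂ where
  toFun := Lsgn s
  map_one' := by cases s <;> ext x z <;> simp [Lsgn, Lp, Lm, one_apply]
  map_mul' g h := by cases s <;> ext x z <;> simp [Lsgn, Lp, Lm, mul_apply, mul_assoc]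

omit [Fintype G] in
theorem conjTranspose_Lsgn (s : Bool) (g : G) : (Lsgn s g)ᴴ = Lsgn s g⁻¹ := by
  cases s <;> ext x z <;>
    simp [Lsgn, Lp, Lm, eq_inv_mul_iff_mul_eq, eq_mul_inv_iff_mul_eq, eq_comm]

def vertexRep {k : ℕ} (s : Fin k → Bool) : G →* Matrix (Fin k → G) (Fin k → G) ℂ :=
  piKroneckerHom.comp (MonoidHom.pi fun i => LsgnHom (s i))

theorem vertexRep_apply {k : ℕ} (s : Fin k → Bool) (g : G) :
    vertexRep s g = piKronecker fun i => Lsgn (s i) g := rfl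

theorem star_vertexRep {k : ℕ} (s : Fin k → Bool) (g : G) :
    star (vertexRep s g) = vertexRep s g⁻¹ := by
  simp only [vertexRep_apply, star_eq_conjTranspose, conjTranspose_piKronecker,
    conjTranspose_Lsgn]

def powSign (t : Bool) (g : G) : G := if t then g else g⁻¹

omit [Fintype G] [DecidableEq G] in
theorem powSign_injective (t : Bool) : Injective (powSign (G := G) t) := by
  cases t
  exacts [inv_injective, injective_id]

omit [Fintype G] in
theorem Tsgn_eq_single (t : Bool) (g : G) :
    Tsgn t g = single (powSign t g) (powSign t g) 1 := by
  cases t <;> ext x z <;> simp [Tsgn, Tm, Tp, powSign, single_apply, eq_comm]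

theorem statement12_general (k : ℕ) (s t : Fin k → Bool)
    (A B : Matrix (Fin k → G) (Fin k → G) ℂ)
    (hA : A = ((Fintype.card G : ℂ))⁻¹ •
      ∑ g : G, ((List.finRange k).map (fun i => factor i (Lsgn (s i) g))).prod)
    (hB : B = ∑ a ∈ Finset.univ.filter
        (fun a : Fin k → G => (((List.finRange k).reverse).map a).prod = 1),
      ((List.finRange k).map (fun i => factor i (Tsgn (t i) (a i)))).prod) :
    A * A = A ∧ Aᴴ = A ∧ B * B = B ∧ Bᴴ = B := by
  have hτ : Injective fun (a : Fin k → G) i => powSign (t i) (a i) :=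
    fun a b h => funext fun i => powSign_injective (t i) (congrFun h i)
  simp only [prod_factor_finRange, ← vertexRep_apply] at hA
  simp only [prod_factor_finRange, Tsgn_eq_single, piKronecker_single, Finset.prod_const_one] at hB
  subst hA hB
  exact ⟨(isIdempotentElem_average _).eq, (isSelfAdjoint_average _ (star_vertexRep s)).star_eq,
    (isIdempotentElem_sum_single_self hτ _).eq, (isSelfAdjoint_sum_single_self _ _).star_eq⟩

/-- The vertex operator `A = (1/|G|) ∑_g L₀^g ⋯ L_{k-1}^g` and the plaquette
operator `B = ∑_{g_{k-1}⋯g₁g₀=1} T₀^{g₀} ⋯ T_{k-1}^{g_{k-1}}` are orthogonal projections. -/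
theorem statement12 (k : ℕ) (hk : 1 ≤ k) (s t : Fin k → Bool)
    (A B : Matrix (Fin k → G) (Fin k → G) ℂ)
    (hA : A = ((Fintype.card G : ℂ))⁻¹ •
      ∑ g : G, ((List.finRange k).map (fun i => factor i (Lsgn (s i) g))).prod)
    (hB : B = ∑ a ∈ Finset.univ.filter
        (fun a : Fin k → G => (((List.finRange k).reverse).map a).prod = 1),
      ((List.finRange k).map (fun i => factor i (Tsgn (t i) (a i)))).prod) :
    A * A = A ∧ Aᴴ = A ∧ B * B = B ∧ Bᴴ = B :=
  statement12_general k s t A B hA hB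
end
end
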